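/- arXiv:1508.02759 — 4 statements merged into one kernel-verified Lean document; each statement's English description precedes it below -/
import Mathlib

section
/- Dominance criterion for the hard-capacity Split (case i < j with equal loads): if i < j, Q(i) = Q(j), and p(i) + d₀(i+1) − D(i+1) ≤ p(j) + d₀(j+1) − D(j+1), then for every x > j the extension (i,x) is feasible exactly when (j,x) is feasible, and in that case f(i,x) ≤ f(j,x). -/
/-- Dominance criterion for the hard-capacity Split, case `i < j` with equal loads:
for every `x > j` the extension `(i,x)` is feasible exactly when `(j,x)` is, and in
that case `f i x ≤ f j x`. -/
theorem split_dominance_hard_lt (n : ℕ) (hn : 1 ≤ n) (Qcap : ℝ) (hQcap : 0 < Qcap)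
    (p d0 dret D Q : ℕ → ℝ) (hQ : Monotone Q)
    (f : ℕ → ℕ → ℝ)
    (hf : ∀ i x, i < x → x ≤ n →
      f i x = p i + d0 (i + 1) + D x - D (i + 1) + dret x)
    (i j : ℕ) (hij : i < j) (hload : Q i = Q j)
    (hcost : p i + d0 (i + 1) - D (i + 1) ≤ p j + d0 (j + 1) - D (j + 1)) :
    ∀ x, j < x → x ≤ n →
      ((Q x - Q i ≤ Qcap ↔ Q x - Q j ≤ Qcap) ∧
        (Q x - Q i ≤ Qcap → f i x ≤ f j x)) := by
  intro x hjx hxn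
  refine ⟨by rw [hload], fun _ => ?_⟩
  rw [hf i x (hij.trans hjx) hxn, hf j x hjx hxn]
  linarith
end

section
/- Single-crossing property of soft-capacity candidates: if i < j (so Q(i) ≤ Q(j)) and h_j(q') ≤ h_i(q') for some q', then h_j(q) ≤ h_i(q) for all q ≥ q'. In particular, once a front candidate i is dominated at load Q(t') by a candidate j with larger load, it remains dominated for all later iterations t ≥ t'. -/
/-- Single-crossing property of soft-capacity candidates: if `Q i ≤ Q j` and
`h_j(q') ≤ h_i(q')` for some `q'`, then `h_j(q) ≤ h_i(q)` for all `q ≥ q'`. -/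
theorem split_soft_single_crossing (α Qcap : ℝ) (hα : 0 ≤ α) (hQcap : 0 < Qcap)
    (hi hj Qi Qj : ℝ) (hQ : Qi ≤ Qj) (q' : ℝ)
    (hdom : hj + α * max (q' - Qj - Qcap) 0 ≤ hi + α * max (q' - Qi - Qcap) 0) :
    ∀ q : ℝ, q' ≤ q →
      hj + α * max (q - Qj - Qcap) 0 ≤ hi + α * max (q - Qi - Qcap) 0 := by
  intro q hq
  have key : max (q - Qj - Qcap) 0 - max (q - Qi - Qcap) 0 ≤
      max (q' - Qj - Qcap) 0 - max (q' - Qi - Qcap) 0 := by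
    rcases le_total (q - Qj - Qcap) 0 with h1 | h1 <;>
      rcases le_total (q - Qi - Qcap) 0 with h2 | h2 <;>
      rcases le_total (q' - Qj - Qcap) 0 with h3 | h3 <;>
      rcases le_total (q' - Qi - Qcap) 0 with h4 | h4 <;>
      simp [max_eq_left, max_eq_right, *] <;> linarith
  nlinarith [mul_le_mul_of_nonneg_left key hα]
end

section
/- Soft-capacity cost function also satisfies the (non-strict) Monge property: for all 0 ≤ i₁ < i₂ < j₁ < j₂ ≤ n, c_α(i₁,j₁) + c_α(i₂,j₂) ≤ c_α(i₁,j₂) + c_α(i₂,j₁), where c_α includes the linear overload penalty. -/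
/-- The soft-capacity cost function, including the linear overload penalty, also
satisfies the (non-strict) Monge property. -/
theorem split_soft_monge (n : ℕ) (α Qcap : ℝ) (hα : 0 ≤ α) (hQcap : 0 < Qcap)
    (d0 dret D Q : ℕ → ℝ) (hQ : Monotone Q)
    (cα : ℕ → ℕ → ℝ)
    (hc : ∀ i j, i < j → j ≤ n →
      cα i j = d0 (i + 1) + D j - D (i + 1) + dret j +
        α * max (Q j - Q i - Qcap) 0)
    (i₁ i₂ j₁ j₂ : ℕ) (h₁ : i₁ < i₂) (h₂ : i₂ < j₁) (h₃ : j₁ < j₂) (h₄ : j₂ ≤ n) :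
    cα i₁ j₁ + cα i₂ j₂ ≤ cα i₁ j₂ + cα i₂ j₁ := by
  have key : ∀ p q r s : ℝ, p + s = q + r → p ≤ q → r ≤ s → q ≤ s →
      max q 0 + max r 0 ≤ max p 0 + max s 0 := by
    intro p q r s h hpq hrs hqs
    rcases max_cases p 0 with ⟨e1, f1⟩ | ⟨e1, f1⟩ <;>
      rcases max_cases q 0 with ⟨e2, f2⟩ | ⟨e2, f2⟩ <;>
      rcases max_cases r 0 with ⟨e3, f3⟩ | ⟨e3, f3⟩ <;>
      rcases max_cases s 0 with ⟨e4, f4⟩ | ⟨e4, f4⟩ <;>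
      rw [e1, e2, e3, e4] <;> linarith
  rw [hc i₁ j₁ (h₁.trans h₂) (le_of_lt (h₃.trans_le h₄)),
      hc i₂ j₂ (h₂.trans h₃) h₄,
      hc i₁ j₂ (h₁.trans (h₂.trans h₃)) h₄,
      hc i₂ j₁ h₂ (le_of_lt (h₃.trans_le h₄))]
  have hmax := key (Q j₁ - Q i₂ - Qcap) (Q j₁ - Q i₁ - Qcap) (Q j₂ - Q i₂ - Qcap)
      (Q j₂ - Q i₁ - Qcap) (by ring)
      (by have := hQ h₁.le; linarith)
      (by have := hQ h₁.le; linarith)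
      (by have := hQ h₃.le; linarith)
  have := mul_le_mul_of_nonneg_left hmax hα
  nlinarith [this]
end

section
/- Limited-fleet Bellman recursion correctness: define p(0,0) = 0, p(k,t) = +∞ for t < k, and p(k+1,t) = min over k ≤ i < t with Q(t) − Q(i) ≤ Qcap of p(k,i) + c(i,t). Then p(k,t) equals the minimum cost of a feasible partition of (1,…,t) into exactly k consecutive segments each with total demand at most Qcap (and equals +∞ if no such partition exists). -/
/-!
Deleting the last cut point `i` of a feasible split of `(1,…,t)` into `k + 1` segments leaves
a feasible split of `(1,…,i)` into `k` segments with `i < t` and `Q t - Q i ≤ Qcap`, and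
`Fin.snoc` reverses this. Hence the optimal costs satisfy the same Bellman recursion as `p`,
since adding the finite cost `c i t` commutes with infima in `EReal`, and induction on `k`
identifies the two.
-/

theorem EReal.sInf_le_sInf_add_coe {R S : Set EReal} {a : ℝ}
    (h : ∀ w ∈ S, sInf R ≤ w + a) : sInf R ≤ sInf S + a := by
  rw [← EReal.sub_le_iff_le_add (.inl (EReal.coe_ne_bot a)) (.inl (EReal.coe_ne_top a))]
  refine le_sInf fun w hw => ?_
  rw [EReal.sub_le_iff_le_add (.inl (EReal.coe_ne_bot a)) (.inl (EReal.coe_ne_top a))]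
  exact h w hw

section Splits

variable {Q : ℕ → ℝ} {Qcap : ℝ} {c : ℕ → ℕ → ℝ} {k t : ℕ}

def IsFeasibleSplit (Q : ℕ → ℝ) (Qcap : ℝ) (k t : ℕ) (s : Fin (k + 1) → ℕ) : Prop :=
  StrictMono s ∧ s 0 = 0 ∧ s (Fin.last k) = t ∧
    ∀ j : Fin k, Q (s j.succ) - Q (s j.castSucc) ≤ Qcap

def splitCost (c : ℕ → ℕ → ℝ) (s : Fin (k + 1) → ℕ) : ℝ :=
  ∑ j : Fin k, c (s j.castSucc) (s j.succ)

def feasibleSplitCosts (Q : ℕ → ℝ) (Qcap : ℝ) (c : ℕ → ℕ → ℝ) (k t : ℕ) :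
    Set EReal :=
  {v | ∃ s, IsFeasibleSplit Q Qcap k t s ∧ v = splitCost c s}

theorem isFeasibleSplit_snoc_iff {s : Fin (k + 1) → ℕ} :
    IsFeasibleSplit Q Qcap (k + 1) t (Fin.snoc s t) ↔
      IsFeasibleSplit Q Qcap k (s (Fin.last k)) s ∧
        s (Fin.last k) < t ∧ Q t - Q (s (Fin.last k)) ≤ Qcap := by
  have hzero : (0 : Fin (k + 2)) = Fin.castSucc 0 := rfl
  simp only [IsFeasibleSplit, Fin.strictMono_iff_lt_succ, Fin.forall_fin_succ' (n := k), hzero,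
    Fin.succ_last, Fin.succ_castSucc, Fin.snoc_castSucc, Fin.snoc_last, true_and]
  tauto

theorem IsFeasibleSplit.apply_last {s : Fin (k + 1) → ℕ} (hs : IsFeasibleSplit Q Qcap k t s) :
    s (Fin.last k) = t :=
  hs.2.2.1

theorem IsFeasibleSplit.apply_zero {s : Fin (k + 1) → ℕ} (hs : IsFeasibleSplit Q Qcap k t s) :
    s 0 = 0 :=
  hs.2.1

theorem IsFeasibleSplit.eq_snoc_init {s : Fin (k + 2) → ℕ}
    (hs : IsFeasibleSplit Q Qcap (k + 1) t s) : s = Fin.snoc (Fin.init s) t := by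
  rw [← hs.apply_last, Fin.snoc_init_self]

theorem IsFeasibleSplit.le {s : Fin (k + 1) → ℕ} (hs : IsFeasibleSplit Q Qcap k t s) :
    k ≤ t := by
  induction k generalizing t with
  | zero => exact t.zero_le
  | succ k ih =>
    rw [hs.eq_snoc_init, isFeasibleSplit_snoc_iff] at hs
    exact (ih hs.1).trans_lt hs.2.1

theorem splitCost_snoc (s : Fin (k + 1) → ℕ) :
    splitCost c (Fin.snoc s t : Fin (k + 2) → ℕ) = splitCost c s + c (s (Fin.last k)) t := by
  simp only [splitCost, Fin.sum_univ_castSucc, Fin.succ_castSucc, Fin.snoc_castSucc, Fin.succ_last,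
    Fin.snoc_last]

theorem feasibleSplitCosts_zero_zero : feasibleSplitCosts Q Qcap c 0 0 = {0} := by
  ext v
  constructor
  · rintro ⟨s, -, rfl⟩
    simp [splitCost]
  · rintro rfl
    exact ⟨0, ⟨Subsingleton.strictMono (α := Fin 1) _, rfl, rfl, fun j => j.elim0⟩,
      by simp [splitCost]⟩

theorem feasibleSplitCosts_zero_of_ne_zero (ht : t ≠ 0) : feasibleSplitCosts Q Qcap c 0 t = ∅ :=
  Set.eq_empty_of_forall_notMem fun _ ⟨_, hs, _⟩ => ht (hs.apply_last.symm.trans hs.apply_zero)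

theorem feasibleSplitCosts_eq_empty_of_lt (h : t < k) : feasibleSplitCosts Q Qcap c k t = ∅ :=
  Set.eq_empty_of_forall_notMem fun _ ⟨_, hs, _⟩ => h.not_ge hs.le

theorem mem_feasibleSplitCosts_succ {v : EReal} :
    v ∈ feasibleSplitCosts Q Qcap c (k + 1) t ↔
      ∃ i, k ≤ i ∧ i < t ∧ Q t - Q i ≤ Qcap ∧
      ∃ w ∈ feasibleSplitCosts Q Qcap c k i, v = w + c i t := by
  constructor
  · rintro ⟨s, hs, rfl⟩
    obtain ⟨s, rfl⟩ : ∃ s', s = Fin.snoc s' t := ⟨_, hs.eq_snoc_init⟩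
    obtain ⟨hs, hlt, hcap⟩ := isFeasibleSplit_snoc_iff.1 hs
    exact ⟨_, hs.le, hlt, hcap, _, ⟨s, hs, rfl⟩, by rw [splitCost_snoc, EReal.coe_add]⟩
  · rintro ⟨i, -, hit, hcap, _, ⟨s, hs, rfl⟩, rfl⟩
    obtain rfl := hs.apply_last
    exact ⟨_, isFeasibleSplit_snoc_iff.2 ⟨hs, hit, hcap⟩,
      by rw [splitCost_snoc, EReal.coe_add]⟩

theorem sInf_feasibleSplitCosts_succ : sInf (feasibleSplitCosts Q Qcap c (k + 1) t) =
    sInf {v | ∃ i, k ≤ i ∧ i < t ∧ Q t - Q i ≤ Qcap ∧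
      v = sInf (feasibleSplitCosts Q Qcap c k i) + c i t} := by
  apply le_antisymm
  · refine le_sInf ?_
    rintro _ ⟨i, hki, hit, hcap, rfl⟩
    exact EReal.sInf_le_sInf_add_coe fun w hw =>
      sInf_le (mem_feasibleSplitCosts_succ.2 ⟨i, hki, hit, hcap, w, hw, rfl⟩)
  · refine le_sInf fun v hv => ?_
    obtain ⟨i, hki, hit, hcap, w, hw, rfl⟩ := mem_feasibleSplitCosts_succ.1 hv
    calc sInf {v | ∃ i, k ≤ i ∧ i < t ∧ Q t - Q i ≤ Qcap ∧
          v = sInf (feasibleSplitCosts Q Qcap c k i) + c i t}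
      _ ≤ sInf (feasibleSplitCosts Q Qcap c k i) + c i t := sInf_le ⟨i, hki, hit, hcap, rfl⟩
      _ ≤ w + c i t := add_le_add_left (sInf_le hw) _

end Splits

theorem split_limited_fleet_bellman_correct_general (n m : ℕ)
    (Qcap : ℝ) (Q : ℕ → ℝ)
    (c : ℕ → ℕ → ℝ) (p : ℕ → ℕ → EReal)
    (hp00 : p 0 0 = 0)
    (hpinf : ∀ k t, t < k → p k t = ⊤)
    (hp0 : ∀ t, 1 ≤ t → p 0 t = ⊤)
    (hrec : ∀ k t, 1 ≤ t → t ≤ n →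
      p (k + 1) t = sInf {v : EReal | ∃ i, k ≤ i ∧ i < t ∧ Q t - Q i ≤ Qcap ∧
        v = p k i + (c i t : EReal)}) :
    ∀ k t, k ≤ m → t ≤ n →
      p k t = sInf {v : EReal | ∃ s : Fin (k + 1) → ℕ, StrictMono s ∧
        s 0 = 0 ∧ s (Fin.last k) = t ∧
        (∀ j : Fin k, Q (s j.succ) - Q (s j.castSucc) ≤ Qcap) ∧
        v = ((∑ j : Fin k, c (s j.castSucc) (s j.succ) : ℝ) : EReal)} := by
  suffices h : ∀ k t, k ≤ m → t ≤ n → p k t = sInf (feasibleSplitCosts Q Qcap c k t) by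
    simpa only [feasibleSplitCosts, IsFeasibleSplit, splitCost, and_assoc] using h
  intro k
  induction k with
  | zero =>
    rintro (_ | t) - -
    · rw [hp00, feasibleSplitCosts_zero_zero, sInf_singleton]
    · rw [hp0 _ t.succ_pos, feasibleSplitCosts_zero_of_ne_zero t.succ_ne_zero, sInf_empty]
  | succ k ih =>
    rintro (_ | t) hk ht
    · rw [hpinf _ _ k.succ_pos, feasibleSplitCosts_eq_empty_of_lt k.succ_pos, sInf_empty]
    · rw [hrec k _ t.succ_pos ht, sInf_feasibleSplitCosts_succ]
      refine congrArg sInf (Set.ext fun v => exists_congr fun i => and_congr_right fun _ =>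
        and_congr_right fun hit => ?_)
      rw [ih i (by omega) (by omega)]

/-- Correctness of the limited-fleet Bellman recursion: `p k t` equals the minimum
cost (in `ℝ ∪ {+∞}`) of a feasible partition of `(1,…,t)` into exactly `k`
consecutive segments each with total demand at most `Qcap`. -/
theorem split_limited_fleet_bellman_correct (n m : ℕ) (hn : 1 ≤ n) (hm : 1 ≤ m)
    (Qcap : ℝ) (hQcap : 0 < Qcap) (Q : ℕ → ℝ) (hQ0 : Q 0 = 0) (hQmono : Monotone Q)
    (c : ℕ → ℕ → ℝ) (p : ℕ → ℕ → EReal)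
    (hp00 : p 0 0 = 0)
    (hpinf : ∀ k t, t < k → p k t = ⊤)
    (hp0 : ∀ t, 1 ≤ t → p 0 t = ⊤)
    (hrec : ∀ k t, 1 ≤ t → t ≤ n →
      p (k + 1) t = sInf {v : EReal | ∃ i, k ≤ i ∧ i < t ∧ Q t - Q i ≤ Qcap ∧
        v = p k i + (c i t : EReal)}) :
    ∀ k t, k ≤ m → t ≤ n →
      p k t = sInf {v : EReal | ∃ s : Fin (k + 1) → ℕ, StrictMono s ∧
        s 0 = 0 ∧ s (Fin.last k) = t ∧
        (∀ j : Fin k, Q (s j.succ) - Q (s j.castSucc) ≤ Qcap) ∧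
        v = ((∑ j : Fin k, c (s j.castSucc) (s j.succ) : ℝ) : EReal)} :=
  split_limited_fleet_bellman_correct_general n m Qcap Q c p hp00 hpinf hp0 hrec
end
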